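/- arXiv:1108.3415 — 5 statements merged into one kernel-verified Lean document; each statement's English description precedes it below -/
import Mathlib

section
/- Let N ≥ 2 and let X : Z_N → F be a frequency-hopping sequence of length N over a frequency alphabet F of size M ≥ 1. Let b = N mod M. Then the maximum out-of-phase Hamming autocorrelation H(X) := max_{1 ≤ τ ≤ N−1} H_X(τ) satisfies H(X) ≥ ⌈(N−b)(N+b−M) / (M(N−1))⌉. -/
open Finset

/-- Periodic Hamming correlation of two FHSs `X, Y : ZMod N → F` at shift `τ`. -/
def Hcorr {N : ℕ} [NeZero N] {F : Type*} [DecidableEq F]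
    (X Y : ZMod N → F) (τ : ZMod N) : ℕ :=
  (Finset.univ.filter (fun t => X t = Y (t + τ))).card

/-- `N_X(a)`: number of occurrences of frequency `a` in the FHS `X`. -/
def countFreq {N : ℕ} [NeZero N] {F : Type*} [DecidableEq F]
    (X : ZMod N → F) (a : F) : ℕ :=
  (Finset.univ.filter (fun t => X t = a)).card

/-- `N_U(a)`: total number of occurrences of `a` in the FHS set `U`. -/
def countFreqSet {N L : ℕ} [NeZero N] {F : Type*} [DecidableEq F]
    (U : Fin L → ZMod N → F) (a : F) : ℕ :=
  ∑ i : Fin L, countFreq (U i) a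

/-- `S_a(U)`: sum of all out-of-phase Hamming autocorrelation values. -/
def Sa {N L : ℕ} [NeZero N] {F : Type*} [DecidableEq F]
    (U : Fin L → ZMod N → F) : ℕ :=
  ∑ i : Fin L, ∑ τ ∈ Finset.univ \ {(0 : ZMod N)}, Hcorr (U i) (U i) τ

/-- `S_c(U)`: sum of all Hamming crosscorrelation values (ordered pairs `i ≠ j`). -/
def Sc {N L : ℕ} [NeZero N] {F : Type*} [DecidableEq F]
    (U : Fin L → ZMod N → F) : ℕ :=
  ∑ i : Fin L, ∑ j ∈ Finset.univ \ {i}, ∑ τ : ZMod N, Hcorr (U i) (U j) τ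

/-- Average Hamming autocorrelation `A_a(U) = S_a(U)/(L(N-1))`. -/
def Aa {N L : ℕ} [NeZero N] {F : Type*} [DecidableEq F]
    (U : Fin L → ZMod N → F) : ℚ :=
  (Sa U : ℚ) / ((L : ℚ) * ((N : ℚ) - 1))

/-- Average Hamming crosscorrelation `A_c(U) = S_c(U)/(L(L-1)N)`. -/
def Ac {N L : ℕ} [NeZero N] {F : Type*} [DecidableEq F]
    (U : Fin L → ZMod N → F) : ℚ :=
  (Sc U : ℚ) / ((L : ℚ) * ((L : ℚ) - 1) * (N : ℚ))

/-- `H_a(U)`: maximum out-of-phase Hamming autocorrelation of the set `U`. -/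
def Ha {N L : ℕ} [NeZero N] {F : Type*} [DecidableEq F]
    (U : Fin L → ZMod N → F) : ℕ :=
  Finset.univ.sup fun i => (Finset.univ \ {(0 : ZMod N)}).sup fun τ => Hcorr (U i) (U i) τ

/-- `H_c(U)`: maximum Hamming crosscorrelation of the set `U`. -/
def Hc {N L : ℕ} [NeZero N] {F : Type*} [DecidableEq F]
    (U : Fin L → ZMod N → F) : ℕ :=
  Finset.univ.sup fun i => (Finset.univ \ {i}).sup fun j =>
    Finset.univ.sup fun τ => Hcorr (U i) (U j) τ

/-- `U` has optimal average Hamming correlation (meets the Peng et al. AHC bound with equality). -/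
def optimalAHC {N L : ℕ} [NeZero N] {F : Type*} [Fintype F] [DecidableEq F]
    (U : Fin L → ZMod N → F) : Prop :=
  Aa U / ((N : ℚ) * ((L : ℚ) - 1)) + Ac U / ((N : ℚ) - 1)
    = ((N : ℚ) * L - Fintype.card F) /
      ((Fintype.card F : ℚ) * ((N : ℚ) - 1) * ((L : ℚ) - 1))

/-- The cyclotomic class `C_r = {α^(Ml+r) : 0 ≤ l ≤ f-1}`. -/
def cycClass {F : Type*} [Monoid F] [DecidableEq F] (α : F) (M f r : ℕ) : Finset F :=
  (Finset.range f).image fun l => α ^ (M * l + r)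

/-- The cyclotomic number `(i,j)_M = |(C_i + 1) ∩ C_j|`. -/
def cycNum {F : Type*} [Field F] [DecidableEq F] (α : F) (M f i j : ℕ) : ℕ :=
  (((cycClass α M f i).image fun x => x + 1) ∩ cycClass α M f j).card

lemma LG_corrSum {N : ℕ} [NeZero N] {F : Type*} [Fintype F] [DecidableEq F]
    (X : ZMod N → F) :
    ∑ τ : ZMod N, Hcorr X X τ = ∑ a : F, (countFreq X a)^2 := by
  have L : ∑ τ : ZMod N, Hcorr X X τ
      = ∑ t : ZMod N, ∑ s : ZMod N, (if X t = X s then 1 else 0) := by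
    unfold Hcorr
    simp only [Finset.card_filter]
    rw [Finset.sum_comm]
    refine Finset.sum_congr rfl fun t _ => ?_
    exact Fintype.sum_equiv (Equiv.addLeft t) _ _ (fun τ => rfl)
  have R : ∑ a : F, (countFreq X a)^2
      = ∑ t : ZMod N, ∑ s : ZMod N, (if X t = X s then 1 else 0) := by
    unfold countFreq
    simp only [Finset.card_filter, sq, Finset.sum_mul_sum]
    rw [Finset.sum_comm]
    refine Finset.sum_congr rfl fun t _ => ?_
    rw [Finset.sum_comm]
    refine Finset.sum_congr rfl fun s _ => ?_
    simp only [ite_mul, one_mul, zero_mul]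
    rw [Finset.sum_ite_eq univ (X t) (fun a => if X s = a then 1 else 0)]
    simp [eq_comm]
  rw [L, R]

lemma LG_corrZero {N : ℕ} [NeZero N] {F : Type*} [DecidableEq F]
    (X : ZMod N → F) : Hcorr X X 0 = N := by
  unfold Hcorr
  simp [ZMod.card]

lemma LG_freqSum {N : ℕ} [NeZero N] {F : Type*} [Fintype F] [DecidableEq F]
    (X : ZMod N → F) : ∑ a : F, countFreq X a = N := by
  unfold countFreq
  rw [← Finset.card_eq_sum_card_fiberwise (fun t _ => Finset.mem_univ (X t))]
  simp [ZMod.card]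

lemma LG_int_sq (k : ℤ) : |k| ≤ k^2 := by
  rw [← sq_abs]
  nlinarith [abs_nonneg k, sq_nonneg (|k| - 1)]

lemma LG_sum_sq_ge {F : Type*} [Fintype F] (k : F → ℤ) :
    |∑ a : F, k a| ≤ ∑ a : F, (k a)^2 :=
  (Finset.abs_sum_le_sum_abs _ _).trans
    (Finset.sum_le_sum fun a _ => LG_int_sq (k a))

set_option maxHeartbeats 1000000 in
/-- the Lempel-Greenberger bound. -/
theorem lempel_greenberger_bound {N M : ℕ} [NeZero N] (hN : 2 ≤ N)
    {F : Type*} [Fintype F] [DecidableEq F] (hM : Fintype.card F = M) (hM1 : 1 ≤ M)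
    (X : ZMod N → F) (b : ℕ) (hb : b = N % M) :
    ⌈(((N : ℚ) - (b : ℚ)) * ((N : ℚ) + (b : ℚ) - (M : ℚ))) / ((M : ℚ) * ((N : ℚ) - 1))⌉
      ≤ (((Finset.univ \ {(0 : ZMod N)}).sup fun τ => Hcorr X X τ : ℕ) : ℤ) := by
  set H : ℕ := (Finset.univ \ {(0 : ZMod N)}).sup fun τ => Hcorr X X τ with hH
  set S : ℕ := ∑ τ ∈ Finset.univ \ {(0 : ZMod N)}, Hcorr X X τ with hS
  have hScard : (Finset.univ \ {(0 : ZMod N)}).card = N - 1 := by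
    rw [Finset.card_sdiff_of_subset (by simp)]
    simp [ZMod.card]
  have hSle : S ≤ (N - 1) * H := by
    calc S ≤ (Finset.univ \ {(0 : ZMod N)}).card • H :=
          Finset.sum_le_card_nsmul _ _ H (fun τ ht => Finset.le_sup ht)
      _ = (N - 1) * H := by rw [hScard, smul_eq_mul]
  have hSsum : S + N = ∑ a : F, (countFreq X a)^2 := by
    rw [← LG_corrSum X,
      Finset.sum_eq_sum_sdiff_singleton_add (Finset.mem_univ (0 : ZMod N)), LG_corrZero]
  set q : ℕ := N / M with hq
  have hdm : M * q + b = N := by rw [hb, hq]; exact Nat.div_add_mod N M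
  have hNdm : (N : ℤ) = M * q + b := by exact_mod_cast hdm.symm
  have hx : ∑ a : F, (countFreq X a : ℤ) = N := by exact_mod_cast LG_freqSum X
  have hsumk : ∑ a : F, ((countFreq X a : ℤ) - q) = b := by
    rw [Finset.sum_sub_distrib, Finset.sum_const, Finset.card_univ, hM, hx, hNdm]
    push_cast; ring
  have hkey : (b : ℤ) ≤ ∑ a : F, ((countFreq X a : ℤ) - q)^2 := by
    have h := LG_sum_sq_ge (fun a => (countFreq X a : ℤ) - q)
    rwa [hsumk, abs_of_nonneg (by positivity)] at h
  have hexp : ∑ a : F, ((countFreq X a : ℤ) - q)^2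
      = (∑ a : F, (countFreq X a : ℤ)^2) - 2 * q * N + M * q^2 := by
    have h1 : ∀ a ∈ (Finset.univ : Finset F),
        ((countFreq X a : ℤ) - q)^2
          = (countFreq X a : ℤ)^2 - 2 * q * (countFreq X a : ℤ) + q^2 := by
      intro a _; ring
    rw [Finset.sum_congr rfl h1, Finset.sum_add_distrib, Finset.sum_sub_distrib,
      ← Finset.mul_sum, hx, Finset.sum_const, Finset.card_univ, hM, nsmul_eq_mul]
  have hM0 : (0 : ℤ) ≤ M := by positivity
  have h2 : (b : ℤ) + 2 * q * N - M * q^2 ≤ ∑ a : F, (countFreq X a : ℤ)^2 := by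
    have h := hkey; rw [hexp] at h; linarith
  have hMq : (M : ℤ) * q = (N : ℤ) - b := by linarith [hNdm]
  have hMq2 : ((M : ℤ) * q)^2 = ((N : ℤ) - b)^2 := by rw [hMq]
  have hkey2 : (N : ℤ)^2 + b * (M - b) ≤ M * ∑ a : F, (countFreq X a : ℤ)^2 := by
    nlinarith [mul_le_mul_of_nonneg_left h2 hM0, hMq, hMq2]
  have hSZ : (∑ a : F, (countFreq X a : ℤ)^2) = (S : ℤ) + N := by
    exact_mod_cast hSsum.symm
  have hSleZ : (S : ℤ) ≤ ((N : ℤ) - 1) * H := by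
    have h : ((S : ℕ) : ℤ) ≤ (((N - 1) * H : ℕ) : ℤ) := by exact_mod_cast hSle
    have hN1 : ((N - 1 : ℕ) : ℤ) = (N : ℤ) - 1 := by
      rw [Nat.cast_sub (by omega)]; simp
    push_cast at h ⊢
    rw [hN1] at h
    exact h
  have e1 : (M : ℤ) * S ≤ M * (((N : ℤ) - 1) * H) :=
    mul_le_mul_of_nonneg_left hSleZ hM0
  have e2 : (M : ℤ) * S = M * (∑ a : F, (countFreq X a : ℤ)^2) - M * N := by
    rw [hSZ]; ring
  have hfinal : ((N : ℤ) - b) * ((N : ℤ) + b - M) ≤ M * ((N : ℤ) - 1) * H := by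
    linarith [e1, e2, hkey2]
  rw [Int.ceil_le]
  have h1M : (1 : ℚ) ≤ M := by exact_mod_cast hM1
  have h2N : (2 : ℚ) ≤ N := by exact_mod_cast hN
  have hpos : (0 : ℚ) < (M : ℚ) * ((N : ℚ) - 1) := by nlinarith
  rw [div_le_iff₀ hpos]
  have hqq : ((N : ℚ) - b) * ((N : ℚ) + b - M) ≤ (M : ℚ) * ((N : ℚ) - 1) * H := by
    exact_mod_cast hfinal
  push_cast
  nlinarith [hqq]
end

section
/- Let U = {X_0, …, X_{L−1}} be an (N,M,L)-FHS set with N ≥ 2 and L ≥ 1. Then M(N−1)·H_a(U) + NM(L−1)·H_c(U) ≥ N(NL−M), where H_a(U) = max_{i} max_{1 ≤ τ ≤ N−1} H_{X_i}(τ) and H_c(U) = max_{i ≠ j} max_{0 ≤ τ ≤ N−1} H_{X_i,X_j}(τ). -/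
open Finset

section Aux

variable {N : ℕ} [NeZero N] {F : Type*} [DecidableEq F]

lemma Hcorr_self_zero (X : ZMod N → F) : Hcorr X X 0 = N := by
  simp [Hcorr, Finset.filter_true_of_mem, ZMod.card]

lemma sum_countFreq [Fintype F] (X : ZMod N → F) :
    ∑ a : F, countFreq X a = N := by
  simp only [countFreq]
  rw [← Finset.card_eq_sum_card_fiberwise (fun t _ => Finset.mem_univ (X t))]
  simp [ZMod.card]

lemma sum_Hcorr_eq [Fintype F] (X Y : ZMod N → F) :
    ∑ τ : ZMod N, Hcorr X Y τ = ∑ a : F, countFreq X a * countFreq Y a := by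
  have h1 : ∀ t : ZMod N,
      (∑ τ : ZMod N, if X t = Y (t + τ) then 1 else 0) = countFreq Y (X t) := by
    intro t
    rw [countFreq, Finset.card_filter]
    exact Fintype.sum_equiv (Equiv.addLeft t) _ _ (fun τ => by simp [eq_comm])
  calc ∑ τ : ZMod N, Hcorr X Y τ
      = ∑ τ : ZMod N, ∑ t : ZMod N, if X t = Y (t + τ) then 1 else 0 := by
        simp only [Hcorr, Finset.card_filter]
    _ = ∑ t : ZMod N, ∑ τ : ZMod N, if X t = Y (t + τ) then 1 else 0 :=
        Finset.sum_comm
    _ = ∑ t : ZMod N, countFreq Y (X t) := by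
        exact Finset.sum_congr rfl fun t _ => h1 t
    _ = ∑ a : F, ∑ t ∈ Finset.univ.filter (fun t => X t = a), countFreq Y (X t) :=
        (Finset.sum_fiberwise _ _ _).symm
    _ = ∑ a : F, countFreq X a * countFreq Y a := by
        refine Finset.sum_congr rfl fun a _ => ?_
        rw [Finset.sum_congr rfl (fun t ht => by
          rw [(Finset.mem_filter.mp ht).2]), Finset.sum_const, smul_eq_mul]
        rfl

end Aux

/-- the Peng-Fan bound. -/
theorem peng_fan_bound {N M L : ℕ} [NeZero N] (hN : 2 ≤ N) (hL : 1 ≤ L)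
    {F : Type*} [Fintype F] [DecidableEq F] (hM : Fintype.card F = M)
    (U : Fin L → ZMod N → F) :
    (N : ℤ) * ((N : ℤ) * (L : ℤ) - (M : ℤ))
      ≤ (M : ℤ) * ((N : ℤ) - 1) * (Ha U : ℤ)
        + (N : ℤ) * (M : ℤ) * ((L : ℤ) - 1) * (Hc U : ℤ) := by
  -- total sum of correlations
  have hfull : (∑ i : Fin L, ∑ j : Fin L, ∑ τ : ZMod N, Hcorr (U i) (U j) τ)
      = ∑ a : F, countFreqSet U a * countFreqSet U a := by
    calc ∑ i : Fin L, ∑ j : Fin L, ∑ τ : ZMod N, Hcorr (U i) (U j) τ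
        = ∑ i : Fin L, ∑ j : Fin L, ∑ a : F, countFreq (U i) a * countFreq (U j) a := by
          exact Finset.sum_congr rfl fun i _ => Finset.sum_congr rfl fun j _ =>
            sum_Hcorr_eq (U i) (U j)
      _ = ∑ i : Fin L, ∑ a : F, ∑ j : Fin L, countFreq (U i) a * countFreq (U j) a := by
          exact Finset.sum_congr rfl fun i _ => Finset.sum_comm
      _ = ∑ a : F, ∑ i : Fin L, ∑ j : Fin L, countFreq (U i) a * countFreq (U j) a :=
          Finset.sum_comm
      _ = ∑ a : F, countFreqSet U a * countFreqSet U a := by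
          refine Finset.sum_congr rfl fun a _ => ?_
          rw [countFreqSet, Finset.sum_mul_sum]
  -- decomposition: full = Sa + Sc + L * N
  have hdec : (∑ i : Fin L, ∑ j : Fin L, ∑ τ : ZMod N, Hcorr (U i) (U j) τ)
      = Sa U + Sc U + L * N := by
    have : ∀ i : Fin L, ∑ j : Fin L, ∑ τ : ZMod N, Hcorr (U i) (U j) τ
        = (∑ j ∈ Finset.univ \ {i}, ∑ τ : ZMod N, Hcorr (U i) (U j) τ)
          + ((∑ τ ∈ Finset.univ \ {(0 : ZMod N)}, Hcorr (U i) (U i) τ) + N) := by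
      intro i
      rw [Finset.sum_eq_sum_sdiff_singleton_add (Finset.mem_univ i)]
      congr 1
      rw [Finset.sum_eq_sum_sdiff_singleton_add (Finset.mem_univ (0 : ZMod N))]
      rw [Hcorr_self_zero]
    rw [Finset.sum_congr rfl fun i _ => this i]
    rw [Finset.sum_add_distrib, Finset.sum_add_distrib, Sa, Sc]
    simp [mul_comm]
    ring
  -- sum of countFreqSet = N * L
  have hsum : ∑ a : F, countFreqSet U a = N * L := by
    simp only [countFreqSet]
    rw [Finset.sum_comm]
    simp [sum_countFreq, Finset.sum_const, mul_comm]
  -- Cauchy-Schwarz over ℤ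
  have hcs : ((N : ℤ) * L) ^ 2 ≤ (M : ℤ) * ∑ a : F, (countFreqSet U a : ℤ) ^ 2 := by
    have := sq_sum_le_card_mul_sum_sq (s := (Finset.univ : Finset F))
      (f := fun a => (countFreqSet U a : ℤ))
    rw [← Nat.cast_sum, hsum] at this
    simpa [Finset.card_univ, hM, mul_comm] using this
  -- bounds on Sa and Sc
  have hHa : ∀ i : Fin L, ∀ τ ∈ Finset.univ \ {(0 : ZMod N)},
      Hcorr (U i) (U i) τ ≤ Ha U := by
    intro i τ hτ
    exact le_trans (Finset.le_sup hτ) (Finset.le_sup (f := fun i =>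
      (Finset.univ \ {(0 : ZMod N)}).sup fun τ => Hcorr (U i) (U i) τ) (Finset.mem_univ i))
  have hHc : ∀ i : Fin L, ∀ j ∈ Finset.univ \ {i}, ∀ τ : ZMod N,
      Hcorr (U i) (U j) τ ≤ Hc U := by
    intro i j hj τ
    refine le_trans (Finset.le_sup (Finset.mem_univ τ)) ?_
    refine le_trans (Finset.le_sup (f := fun j => Finset.univ.sup fun τ =>
      Hcorr (U i) (U j) τ) hj) ?_
    exact Finset.le_sup (f := fun i => (Finset.univ \ {i}).sup fun j =>
      Finset.univ.sup fun τ => Hcorr (U i) (U j) τ) (Finset.mem_univ i)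
  have hcard0 : (Finset.univ \ {(0 : ZMod N)}).card = N - 1 := by
    rw [Finset.card_sdiff_of_subset (by simp)]
    simp [ZMod.card]
  have hcardi : ∀ i : Fin L, ((Finset.univ : Finset (Fin L)) \ {i}).card = L - 1 := by
    intro i
    rw [Finset.card_sdiff_of_subset (by simp)]
    simp
  have hSa : Sa U ≤ L * ((N - 1) * Ha U) := by
    rw [Sa]
    refine le_trans (Finset.sum_le_card_nsmul _ _ ((N - 1) * Ha U) fun i _ => ?_) (by simp)
    refine le_trans (Finset.sum_le_card_nsmul _ _ (Ha U) (hHa i)) ?_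
    rw [hcard0, smul_eq_mul]
  have hSc : Sc U ≤ L * ((L - 1) * (N * Hc U)) := by
    rw [Sc]
    refine le_trans (Finset.sum_le_card_nsmul _ _ ((L - 1) * (N * Hc U)) fun i _ => ?_) (by simp)
    refine le_trans (Finset.sum_le_card_nsmul _ _ (N * Hc U) fun j hj => ?_) ?_
    · refine le_trans (Finset.sum_le_card_nsmul _ _ (Hc U) fun τ _ => hHc i j hj τ) ?_
      simp [ZMod.card]
    · rw [hcardi i, smul_eq_mul]
  -- assemble over ℤ
  have hT : (∑ a : F, (countFreqSet U a : ℤ) ^ 2)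
      = (Sa U : ℤ) + (Sc U : ℤ) + (L : ℤ) * N := by
    have := congrArg (Nat.cast : ℕ → ℤ) (hfull.symm.trans hdec)
    push_cast at this
    rw [← this]
    exact Finset.sum_congr rfl fun a _ => sq (countFreqSet U a : ℤ)
  have hSa' : (Sa U : ℤ) ≤ (L : ℤ) * (((N : ℤ) - 1) * Ha U) := by
    have := (Nat.cast_le (α := ℤ)).mpr hSa
    push_cast at this ⊢
    rw [Nat.cast_sub (by omega)] at this
    push_cast at this
    linarith
  have hSc' : (Sc U : ℤ) ≤ (L : ℤ) * (((L : ℤ) - 1) * ((N : ℤ) * Hc U)) := by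
    have := (Nat.cast_le (α := ℤ)).mpr hSc
    push_cast at this ⊢
    rw [Nat.cast_sub (by omega)] at this
    push_cast at this
    linarith
  have hM0 : (0 : ℤ) ≤ (M : ℤ) := Nat.cast_nonneg M
  have hL1 : (1 : ℤ) ≤ (L : ℤ) := by exact_mod_cast hL
  have key : (L : ℤ) * ((N : ℤ) * ((N : ℤ) * L - M))
      ≤ (L : ℤ) * ((M : ℤ) * ((N : ℤ) - 1) * Ha U
          + (N : ℤ) * M * ((L : ℤ) - 1) * Hc U) := by
    have h1 := mul_le_mul_of_nonneg_left hSa' hM0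
    have h2 := mul_le_mul_of_nonneg_left hSc' hM0
    rw [hT] at hcs
    nlinarith [hcs, h1, h2]
  exact le_of_mul_le_mul_left key (by linarith)
end

section
/- Let p be an odd prime. For 0 ≤ t ≤ p²−p−1 let t_0 = t mod (p−1) and t_1 = t mod p, and for 0 ≤ i ≤ p−1 define X_i : Z_{p²−p} → Z_p by X_i(t) = (t_0 + 1)·t_1 + i (mod p). Then the (p²−p, p, p)-FHS set U = {X_0, …, X_{p−1}} over Z_p is perfectly balanced (N_{X_i}(a) = p−1 for every i and every a ∈ Z_p), and consequently U has optimal AHC: A_a(U)/((p²−p)(p−1)) + A_c(U)/(p²−p−1) = ((p²−p)p − p)/(p(p²−p−1)(p−1)). -/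
open Finset

lemma sum_Hcorr {N : ℕ} [NeZero N] {F : Type*} [Fintype F] [DecidableEq F]
    (X Y : ZMod N → F) :
    ∑ τ : ZMod N, Hcorr X Y τ = ∑ t : ZMod N, countFreq Y (X t) := by
  unfold Hcorr countFreq
  simp_rw [Finset.card_filter]
  rw [Finset.sum_comm]
  refine Finset.sum_congr rfl fun t _ => ?_
  have h : (fun s => if Y s = X t then (1:ℕ) else 0) = fun s => if X t = Y s then 1 else 0 := by
    funext s; simp [eq_comm]
  calc (∑ x : ZMod N, if X t = Y (t + x) then (1:ℕ) else 0)
      = ∑ s : ZMod N, if X t = Y s then 1 else 0 :=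
        Equiv.sum_comp (Equiv.addLeft t) (fun s => if X t = Y s then 1 else 0)
    _ = ∑ s : ZMod N, if Y s = X t then 1 else 0 := by rw [h]

lemma balance {p : ℕ} [NeZero (p ^ 2 - p)] (hp : p.Prime)
    (X : ZMod (p ^ 2 - p) → ZMod p) (b : ZMod p)
    (hX : ∀ t, X t = (((t.val % (p - 1) + 1) * (t.val % p) : ℕ) : ZMod p) + b)
    (a : ZMod p) : countFreq X a = p - 1 := by
  haveI := Fact.mk hp
  have hp2 : 2 ≤ p := hp.two_le
  have h1 : p - 1 + 1 = p := by omega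
  have cop : Nat.Coprime (p - 1) p := by rw [← h1]; simp
  have hN : p ^ 2 - p = (p - 1) * p := by rw [tsub_mul, one_mul, ← pow_two]
  have hU : ∀ r : ℕ, r < p - 1 → ((r + 1 : ℕ) : ZMod p) ≠ 0 := by
    intro r hr h
    rw [ZMod.natCast_eq_zero_iff] at h
    have := Nat.le_of_dvd (by omega) h
    omega
  have key : ∀ t : ZMod (p ^ 2 - p), (X t = a ↔
      ((t.val % p : ℕ) : ZMod p) = (((t.val % (p - 1) + 1 : ℕ) : ZMod p))⁻¹ * (a - b)) := by
    intro t
    have hr : t.val % (p - 1) < p - 1 := Nat.mod_lt _ (by omega)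
    have hu := hU _ hr
    rw [hX t, Nat.cast_mul, eq_inv_mul_iff_mul_eq₀ hu, eq_sub_iff_add_eq]
  unfold countFreq
  rw [show p - 1 = (Finset.range (p - 1)).card from (Finset.card_range _).symm]
  refine Finset.card_bij'
    (fun t _ => t.val % (p - 1))
    (fun r _ => ((Nat.chineseRemainder cop r
        (((((r + 1 : ℕ) : ZMod p))⁻¹ * (a - b)).val) : ℕ) : ZMod (p ^ 2 - p)))
    ?_ ?_ ?_ ?_
  · intro t _
    exact Finset.mem_range.mpr (Nat.mod_lt _ (by omega))
  · intro r hr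
    rw [Finset.mem_range] at hr
    set w := (((r + 1 : ℕ) : ZMod p))⁻¹ * (a - b) with hwdef
    set v := w.val with hv
    obtain ⟨hk1, hk2⟩ := (Nat.chineseRemainder cop r v).2
    set k := (Nat.chineseRemainder cop r v : ℕ) with hkdef
    have hklt : k < (p - 1) * p :=
      Nat.chineseRemainder_lt_mul cop r v (by omega) (by omega)
    have hval : ((k : ZMod (p ^ 2 - p))).val = k := by
      rw [ZMod.val_cast_of_lt]; rw [hN]; exact hklt
    have e1 : k % (p - 1) = r % (p - 1) := hk1
    have h0 : k % (p - 1) = r := e1.trans (Nat.mod_eq_of_lt hr)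
    have hvp : v < p := ZMod.val_lt w
    have e2 : k % p = v % p := hk2
    have h0' : k % p = v := e2.trans (Nat.mod_eq_of_lt hvp)
    rw [Finset.mem_filter]
    refine ⟨Finset.mem_univ _, ?_⟩
    rw [key, hval, h0, h0', hv, ZMod.natCast_val, ZMod.cast_id, hwdef]
  · intro t ht
    beta_reduce
    rw [Finset.mem_filter] at ht
    have hXt := (key t).mp ht.2
    set r := t.val % (p - 1) with hrdef
    have hr : r < p - 1 := Nat.mod_lt _ (by omega)
    set w := (((r + 1 : ℕ) : ZMod p))⁻¹ * (a - b) with hwdef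
    set v := w.val with hv
    obtain ⟨hk1, hk2⟩ := (Nat.chineseRemainder cop r v).2
    set k := (Nat.chineseRemainder cop r v : ℕ) with hkdef
    have hklt : k < (p - 1) * p :=
      Nat.chineseRemainder_lt_mul cop r v (by omega) (by omega)
    -- t.val % p = v
    have htp : t.val % p = v := by
      have : ((t.val % p : ℕ) : ZMod p) = w := hXt
      have h2 : ((t.val % p : ℕ) : ZMod p).val = t.val % p :=
        ZMod.val_cast_of_lt (Nat.mod_lt _ (by omega))
      rw [this] at h2
      exact h2.symm
    have hvp : v < p := ZMod.val_lt w
    have c1 : k % (p - 1) = t.val % (p - 1) := by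
      calc k % (p - 1) = r % (p - 1) := hk1
        _ = r := Nat.mod_eq_of_lt hr
        _ = t.val % (p - 1) := hrdef
    have c2 : k % p = t.val % p := by
      calc k % p = v % p := hk2
        _ = v := Nat.mod_eq_of_lt hvp
        _ = t.val % p := htp.symm
    have hmod : k ≡ t.val [MOD (p - 1) * p] :=
      (Nat.modEq_and_modEq_iff_modEq_mul cop).mp ⟨c1, c2⟩
    have hkt : k = t.val := Nat.ModEq.eq_of_lt_of_lt hmod hklt (hN ▸ ZMod.val_lt t)
    show (k : ZMod (p ^ 2 - p)) = t
    rw [hkt, ZMod.natCast_val, ZMod.cast_id]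
  · intro r hr
    beta_reduce
    rw [Finset.mem_range] at hr
    set w := (((r + 1 : ℕ) : ZMod p))⁻¹ * (a - b) with hwdef
    set v := w.val with hv
    obtain ⟨hk1, hk2⟩ := (Nat.chineseRemainder cop r v).2
    set k := (Nat.chineseRemainder cop r v : ℕ) with hkdef
    have hklt : k < (p - 1) * p :=
      Nat.chineseRemainder_lt_mul cop r v (by omega) (by omega)
    have hval : ((k : ZMod (p ^ 2 - p))).val = k := by
      rw [ZMod.val_cast_of_lt]; rw [hN]; exact hklt
    show ((k : ZMod (p ^ 2 - p))).val % (p - 1) = r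
    rw [hval]
    have e1 : k % (p - 1) = r % (p - 1) := hk1
    exact e1.trans (Nat.mod_eq_of_lt hr)

/-- Example 10 is perfectly balanced, hence has optimal AHC. -/
theorem example10_optimal_AHC {p : ℕ} [NeZero p] [NeZero (p ^ 2 - p)]
    (hp : p.Prime) (hodd : Odd p)
    (X : Fin p → ZMod (p ^ 2 - p) → ZMod p)
    (hX : ∀ (i : Fin p) (t : ZMod (p ^ 2 - p)),
      X i t = (((t.val % (p - 1) + 1) * (t.val % p) + (i : ℕ) : ℕ) : ZMod p)) :
    (∀ (i : Fin p) (a : ZMod p), countFreq (X i) a = p - 1) ∧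
    Aa X / (((p : ℚ) ^ 2 - (p : ℚ)) * ((p : ℚ) - 1)) + Ac X / (((p : ℚ) ^ 2 - (p : ℚ)) - 1)
      = (((p : ℚ) ^ 2 - (p : ℚ)) * (p : ℚ) - (p : ℚ))
        / ((p : ℚ) * (((p : ℚ) ^ 2 - (p : ℚ)) - 1) * ((p : ℚ) - 1)) := by
  have hp2 : 2 ≤ p := hp.two_le
  have hp3 : 3 ≤ p := by
    rcases hodd with ⟨k, hk⟩; omega
  have hbal : ∀ (i : Fin p) (a : ZMod p), countFreq (X i) a = p - 1 := by
    intro i a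
    refine balance hp (X i) ((i : ℕ) : ZMod p) (fun t => ?_) a
    rw [hX i t]; push_cast; ring
  refine ⟨hbal, ?_⟩
  have hNcard : Fintype.card (ZMod (p ^ 2 - p)) = p ^ 2 - p := ZMod.card _
  have hsum : ∀ i j : Fin p, ∑ τ : ZMod (p ^ 2 - p), Hcorr (X i) (X j) τ
      = (p ^ 2 - p) * (p - 1) := by
    intro i j
    rw [sum_Hcorr]
    calc ∑ t : ZMod (p ^ 2 - p), countFreq (X j) (X i t)
        = ∑ _t : ZMod (p ^ 2 - p), (p - 1) :=
          Finset.sum_congr rfl fun t _ => hbal j _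
      _ = (p ^ 2 - p) * (p - 1) := by
          rw [Finset.sum_const, Finset.card_univ, hNcard, smul_eq_mul]
  have hH0 : ∀ i : Fin p, Hcorr (X i) (X i) 0 = p ^ 2 - p := by
    intro i
    unfold Hcorr
    simp only [add_zero]
    rw [Finset.filter_true, Finset.card_univ, hNcard]
  have hSi : ∀ i : Fin p,
      (∑ τ ∈ Finset.univ \ {(0 : ZMod (p ^ 2 - p))}, Hcorr (X i) (X i) τ)
      + (p ^ 2 - p) = (p ^ 2 - p) * (p - 1) := by
    intro i
    have h := Finset.sum_eq_sum_sdiff_singleton_add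
      (Finset.mem_univ (0 : ZMod (p ^ 2 - p))) (fun τ => Hcorr (X i) (X i) τ)
    rw [hsum i i, hH0 i] at h
    exact h.symm
  have hple : p ≤ p ^ 2 := Nat.le_self_pow two_ne_zero p
  have hNc : ((p ^ 2 - p : ℕ) : ℚ) = (p : ℚ) ^ 2 - p := by push_cast [hple]; ring
  have hp1c : ((p - 1 : ℕ) : ℚ) = (p : ℚ) - 1 := by push_cast [hp.one_le]; ring
  have hq3 : (3 : ℚ) ≤ (p : ℚ) := by exact_mod_cast hp3
  have hSiQ : ∀ i : Fin p,
      ((∑ τ ∈ Finset.univ \ {(0 : ZMod (p ^ 2 - p))}, Hcorr (X i) (X i) τ : ℕ) : ℚ)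
      = ((p : ℚ) ^ 2 - p) * ((p : ℚ) - 1) - ((p : ℚ) ^ 2 - p) := by
    intro i
    have h2 : ((((∑ τ ∈ Finset.univ \ {(0 : ZMod (p ^ 2 - p))}, Hcorr (X i) (X i) τ)
        + (p ^ 2 - p) : ℕ)) : ℚ) = (((p ^ 2 - p) * (p - 1) : ℕ) : ℚ) := by
      exact_mod_cast congrArg (Nat.cast : ℕ → ℚ) (hSi i)
    rw [Nat.cast_add, Nat.cast_mul, hNc, hp1c] at h2
    linarith
  have hSaQ : (Sa X : ℚ) = p * (((p : ℚ) ^ 2 - p) * ((p : ℚ) - 1) - ((p : ℚ) ^ 2 - p)) := by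
    unfold Sa
    rw [Nat.cast_sum, Finset.sum_congr rfl fun i _ => hSiQ i,
      Finset.sum_const, Finset.card_univ, Fintype.card_fin, nsmul_eq_mul]
  have hsumQ : ∀ i j : Fin p, ((∑ τ : ZMod (p ^ 2 - p), Hcorr (X i) (X j) τ : ℕ) : ℚ)
      = ((p : ℚ) ^ 2 - p) * ((p : ℚ) - 1) := by
    intro i j
    rw [hsum i j, Nat.cast_mul, hNc, hp1c]
  have hScQ : (Sc X : ℚ) = p * (((p : ℚ) - 1) * (((p : ℚ) ^ 2 - p) * ((p : ℚ) - 1))) := by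
    unfold Sc
    rw [Nat.cast_sum]
    have hinner : ∀ i : Fin p,
        ((∑ j ∈ Finset.univ \ {i}, ∑ τ : ZMod (p ^ 2 - p), Hcorr (X i) (X j) τ : ℕ) : ℚ)
        = ((p : ℚ) - 1) * (((p : ℚ) ^ 2 - p) * ((p : ℚ) - 1)) := by
      intro i
      rw [Nat.cast_sum, Finset.sum_congr rfl fun j _ => hsumQ i j, Finset.sum_const,
        nsmul_eq_mul]
      congr 1
      rw [Finset.card_univ_diff, Finset.card_singleton, Fintype.card_fin, hp1c]
    rw [Finset.sum_congr rfl fun i _ => hinner i, Finset.sum_const, Finset.card_univ,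
      Fintype.card_fin, nsmul_eq_mul]
  unfold Aa Ac
  rw [hSaQ, hScQ, hNc]
  have d1 : (p : ℚ) ≠ 0 := by positivity
  have d2 : (p : ℚ) - 1 ≠ 0 := by intro h; nlinarith
  have d3 : (p : ℚ) ^ 2 - p ≠ 0 := by intro h; nlinarith
  have d4 : (p : ℚ) ^ 2 - p - 1 ≠ 0 := by intro h; nlinarith
  field_simp
  ring
end

section
/- Let p = Mf + 1 be an odd prime with M ≥ 2 and f ≥ 1, let α be a primitive root modulo p, and let C_r = {α^{Ml+r} mod p : 0 ≤ l ≤ f−1} for 0 ≤ r ≤ M−1 be the cyclotomic classes of order M in F_p. For 0 ≤ i ≤ M−1 define X_i : Z_p → Z_M by X_i(0) = i and X_i(t) = r + i (mod M) whenever t ∈ C_r. Then the (p, M, M)-FHS set U = {X_0, …, X_{M−1}} has optimal AHC: A_a(U)/(p(M−1)) + A_c(U)/(p−1) = (pM−M)/(M(p−1)(M−1)). -/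
open Finset

lemma hcorr_sum_eq {N : ℕ} [NeZero N] {F : Type*} [DecidableEq F]
    (X Y : ZMod N → F) : ∑ τ : ZMod N, Hcorr X Y τ = ∑ t : ZMod N, countFreq Y (X t) := by
  simp only [Hcorr, Finset.card_filter]
  rw [Finset.sum_comm]
  refine Finset.sum_congr rfl fun t _ => ?_
  rw [countFreq, Finset.card_filter]
  exact Finset.sum_equiv (Equiv.addLeft t) (by simp) (fun τ _ => by simp [eq_comm])

/-- Theorem 12 (Construction A), the FHS set has optimal AHC. -/
theorem constructionA_optimal_AHC (p M f : ℕ) [NeZero p] (hp : p.Prime) (hodd : Odd p)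
    (hM : 2 ≤ M) (hf : 1 ≤ f) (hpMf : p = M * f + 1)
    (α : ZMod p) (hα : ∀ x : ZMod p, x ≠ 0 → ∃ k : ℕ, α ^ k = x)
    (U : Fin M → ZMod p → ZMod M)
    (hU0 : ∀ i : Fin M, U i 0 = ((i : ℕ) : ZMod M))
    (hUC : ∀ (i : Fin M) (r : ℕ), r < M → ∀ t ∈ cycClass α M f r,
      U i t = (r : ZMod M) + ((i : ℕ) : ZMod M)) :
    Aa U / ((p : ℚ) * ((M : ℚ) - 1)) + Ac U / ((p : ℚ) - 1)
      = ((p : ℚ) * (M : ℚ) - (M : ℚ)) / ((M : ℚ) * ((p : ℚ) - 1) * ((M : ℚ) - 1)) := by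
  haveI := Fact.mk hp
  haveI : NeZero M := ⟨by omega⟩
  have hp3 : 3 ≤ p := by
    have h2 : 2 * 1 ≤ M * f := Nat.mul_le_mul hM hf
    omega
  have h2ne : ((2:ℕ) : ZMod p) ≠ 0 := by
    intro h
    have hdvd := (ZMod.natCast_eq_zero_iff 2 p).mp h
    have := Nat.le_of_dvd (by norm_num) hdvd; omega
  have hα0 : α ≠ 0 := by
    intro h0
    obtain ⟨k, hk⟩ := hα _ h2ne
    rw [h0] at hk
    rcases Nat.eq_zero_or_pos k with rfl | hk0
    · rw [pow_zero] at hk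
      have h1 : ((1:ℕ) : ZMod p) = ((2:ℕ) : ZMod p) := by exact_mod_cast hk
      rw [ZMod.natCast_eq_natCast_iff'] at h1
      rw [Nat.mod_eq_of_lt (by omega), Nat.mod_eq_of_lt (by omega)] at h1
      omega
    · rw [zero_pow (by omega)] at hk
      exact h2ne hk.symm
  have h1 : α ^ (p-1) = 1 := ZMod.pow_card_sub_one_eq_one hα0
  have hfo : IsOfFinOrder α := isOfFinOrder_iff_pow_eq_one.mpr ⟨p-1, by omega, h1⟩
  have hordpos : 0 < orderOf α := hfo.orderOf_pos
  have hord_dvd : orderOf α ∣ p - 1 := orderOf_dvd_of_pow_eq_one h1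
  have hge : p - 1 ≤ orderOf α := by
    have hsub : Finset.univ.erase (0:ZMod p) ⊆ (Finset.range (orderOf α)).image (fun k => α ^ k) := by
      intro x hx
      obtain ⟨k, hk⟩ := hα x (Finset.mem_erase.mp hx).1
      exact Finset.mem_image.mpr ⟨k % orderOf α, Finset.mem_range.mpr (Nat.mod_lt _ hordpos),
        by rw [pow_mod_orderOf]; exact hk⟩
    have hc1 := Finset.card_le_card hsub
    have hc2 := Finset.card_image_le (s := Finset.range (orderOf α)) (f := fun k => α ^ k)
    have hc3 : (Finset.univ.erase (0:ZMod p)).card = p - 1 := by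
      rw [Finset.card_erase_of_mem (Finset.mem_univ _), Finset.card_univ, ZMod.card]
    rw [Finset.card_range] at hc2
    omega
  have hord : orderOf α = p - 1 :=
    Nat.le_antisymm (Nat.le_of_dvd (by omega) hord_dvd) hge
  have hinj : ∀ a b : ℕ, a < p - 1 → b < p - 1 → α ^ a = α ^ b → a = b := by
    have key : ∀ a b : ℕ, a ≤ b → b < p - 1 → α ^ a = α ^ b → a = b := by
      intro a b hab hb h
      have h2 : α ^ a * α ^ (b - a) = α ^ a * 1 := by
        rw [mul_one, ← pow_add, Nat.add_sub_cancel' hab, h]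
      have h3 := mul_left_cancel₀ (pow_ne_zero a hα0) h2
      have h4 := orderOf_dvd_of_pow_eq_one h3
      rw [hord] at h4
      rcases Nat.eq_zero_or_pos (b - a) with h5 | h5
      · omega
      · have := Nat.le_of_dvd h5 h4; omega
    intro a b ha hb h
    rcases le_total a b with hab | hab
    · exact key a b hab hb h
    · exact (key b a hab ha h.symm).symm
  have hexplt : ∀ l r : ℕ, l < f → r < M → M * l + r < p - 1 := by
    intro l r hl hr
    have h1 : M * l + r < M * (l+1) := by rw [Nat.mul_succ]; omega
    have h2 : M * (l+1) ≤ M * f := Nat.mul_le_mul_left M hl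
    omega
  have hcover : ∀ t : ZMod p, t ≠ 0 → ∃ r, r < M ∧ t ∈ cycClass α M f r := by
    intro t ht
    obtain ⟨k, hk⟩ := hα t ht
    have hk' : α ^ (k % (p-1)) = t := by
      conv_rhs => rw [← hk, ← Nat.div_add_mod k (p-1)]
      rw [pow_add, pow_mul, h1, one_pow, one_mul]
    have hklt : k % (p-1) < p - 1 := Nat.mod_lt _ (by omega)
    refine ⟨k % (p-1) % M, Nat.mod_lt _ (by omega), ?_⟩
    refine Finset.mem_image.mpr ⟨k % (p-1) / M, Finset.mem_range.mpr ?_, ?_⟩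
    · exact Nat.div_lt_of_lt_mul (by omega)
    · rw [Nat.div_add_mod]; exact hk'
  have hC0 : ∀ r (t : ZMod p), t ∈ cycClass α M f r → t ≠ 0 := by
    intro r t htc
    obtain ⟨l, _, rfl⟩ := Finset.mem_image.mp htc
    exact pow_ne_zero _ hα0
  have hCcard : ∀ r, r < M → (cycClass α M f r).card = f := by
    intro r hr
    rw [cycClass, Finset.card_image_of_injOn, Finset.card_range]
    intro a ha b hb hab
    simp only [Finset.coe_range, Set.mem_Iio] at ha hb
    have h := hinj (M*a+r) (M*b+r) (hexplt a r ha hr) (hexplt b r hb hr) hab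
    have := Nat.eq_of_mul_eq_mul_left (show 0 < M by omega) (by omega : M * a = M * b)
    exact this
  have hcount : ∀ (i : Fin M) (a : ZMod M),
      countFreq (U i) a = f + (if a = ((i:ℕ) : ZMod M) then 1 else 0) := by
    intro i a
    have hr0 : (a - ((i:ℕ) : ZMod M)).val < M := ZMod.val_lt _
    have hr0cast : (((a - ((i:ℕ) : ZMod M)).val : ℕ) : ZMod M) = a - ((i:ℕ) : ZMod M) := by
      simp [ZMod.natCast_val, ZMod.cast_id]
    have hS : (Finset.univ.filter (fun t => U i t = a)).erase 0
        = cycClass α M f (a - ((i:ℕ) : ZMod M)).val := by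
      ext t
      simp only [Finset.mem_erase, Finset.mem_filter, Finset.mem_univ, true_and]
      constructor
      · rintro ⟨ht0, hta⟩
        obtain ⟨r, hr, htr⟩ := hcover t ht0
        have hval := hUC i r hr t htr
        rw [hval] at hta
        have hrr : (r : ZMod M) = a - ((i:ℕ) : ZMod M) := eq_sub_of_add_eq hta
        have : r = (a - ((i:ℕ) : ZMod M)).val := by
          have h := congrArg ZMod.val hrr
          rwa [ZMod.val_cast_of_lt hr] at h
        rwa [this] at htr
      · intro htc
        refine ⟨hC0 _ t htc, ?_⟩
        rw [hUC i _ hr0 t htc, hr0cast, sub_add_cancel]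
    have hScard := congrArg Finset.card hS
    rw [hCcard _ hr0] at hScard
    rw [countFreq]
    by_cases hai : a = ((i:ℕ) : ZMod M)
    · have h0mem : (0:ZMod p) ∈ Finset.univ.filter (fun t => U i t = a) := by
        simp [hU0 i, hai]
      have := Finset.card_erase_of_mem h0mem
      have hpos := Finset.card_pos.mpr ⟨_, h0mem⟩
      rw [if_pos hai]
      omega
    · have h0mem : (0:ZMod p) ∉ Finset.univ.filter (fun t => U i t = a) := by
        simp [hU0 i]
        intro h; exact hai h.symm
      rw [Finset.erase_eq_of_notMem h0mem] at hScard
      simp only [if_neg hai]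
      omega
  -- sum of correlations for a pair (i,j)
  have hsum_pair : ∀ i j : Fin M, ∑ τ : ZMod p, Hcorr (U i) (U j) τ
      = p * f + f + (if i = j then 1 else 0) := by
    intro i j
    rw [hcorr_sum_eq]
    have hiff : (((j:ℕ):ZMod M) = ((i:ℕ):ZMod M)) ↔ i = j := by
      rw [ZMod.natCast_eq_natCast_iff', Nat.mod_eq_of_lt j.isLt, Nat.mod_eq_of_lt i.isLt]
      exact ⟨fun h => Fin.ext h.symm, fun h => congrArg Fin.val h.symm⟩
    calc ∑ t : ZMod p, countFreq (U j) (U i t)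
        = ∑ t : ZMod p, (f + (if U i t = ((j:ℕ):ZMod M) then 1 else 0)) :=
          Finset.sum_congr rfl (fun t _ => hcount j (U i t))
      _ = p * f + countFreq (U i) ((j:ℕ):ZMod M) := by
          rw [Finset.sum_add_distrib, Finset.sum_const, Finset.card_univ, ZMod.card,
            smul_eq_mul]
          congr 1
          rw [countFreq, Finset.card_filter]
      _ = p * f + (f + (if ((j:ℕ):ZMod M) = ((i:ℕ):ZMod M) then 1 else 0)) := by rw [hcount]
      _ = p * f + f + (if i = j then 1 else 0) := by
          by_cases h : i = j
          · rw [if_pos (hiff.mpr h), if_pos h]; ring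
          · rw [if_neg (fun hc => h (hiff.mp hc)), if_neg h]; ring
  have hH0 : ∀ i : Fin M, Hcorr (U i) (U i) 0 = p := by
    intro i; rw [Hcorr]
    rw [Finset.filter_true_of_mem (fun t _ => by rw [add_zero]), Finset.card_univ, ZMod.card]
  have hrow : ∀ i : Fin M,
      (∑ τ ∈ Finset.univ \ {(0:ZMod p)}, Hcorr (U i) (U i) τ) + p = p * f + f + 1 := by
    intro i
    have hsd := Finset.sum_sdiff (f := fun τ => Hcorr (U i) (U i) τ)
        (Finset.singleton_subset_iff.mpr (Finset.mem_univ (0:ZMod p)))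
    rw [Finset.sum_singleton, hH0 i] at hsd
    rw [hsd, hsum_pair i i, if_pos rfl]
  have hSa : Sa U + M * p = M * (p * f + f + 1) := by
    have h : ∑ i : Fin M, ((∑ τ ∈ Finset.univ \ {(0:ZMod p)}, Hcorr (U i) (U i) τ) + p)
        = ∑ _i : Fin M, (p*f+f+1) := Finset.sum_congr rfl (fun i _ => hrow i)
    rw [Finset.sum_add_distrib, Finset.sum_const, Finset.card_univ, Fintype.card_fin,
      smul_eq_mul] at h
    rw [Finset.sum_const, Finset.card_univ, Fintype.card_fin, smul_eq_mul] at h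
    rw [Sa]; exact h
  have hSc : Sc U = M * ((M-1) * (p*f+f)) := by
    have hr : ∀ i : Fin M,
        ∑ j ∈ Finset.univ \ {i}, ∑ τ : ZMod p, Hcorr (U i) (U j) τ = (M-1) * (p*f+f) := by
      intro i
      have hterm : ∀ j ∈ Finset.univ \ {i}, ∑ τ : ZMod p, Hcorr (U i) (U j) τ = p*f+f := by
        intro j hj
        have hji : ¬ (i = j) := by
          rw [Finset.mem_sdiff, Finset.mem_singleton] at hj
          exact fun h => hj.2 h.symm
        rw [hsum_pair, if_neg hji, add_zero]
      rw [Finset.sum_congr rfl hterm, Finset.sum_const, smul_eq_mul]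
      congr 1
      rw [Finset.card_sdiff_of_subset (by simp), Finset.card_univ, Fintype.card_fin,
        Finset.card_singleton]
    rw [Sc, Finset.sum_congr rfl (fun i _ => hr i), Finset.sum_const, Finset.card_univ,
      Fintype.card_fin, smul_eq_mul]
  -- final rational arithmetic
  have hpQ : (p:ℚ) = (M:ℚ) * (f:ℚ) + 1 := by
    have : ((p:ℕ):ℚ) = ((M * f + 1 : ℕ):ℚ) := by exact_mod_cast congrArg (Nat.cast : ℕ → ℚ) hpMf
    push_cast at this; exact this
  have hSaQ : (Sa U : ℚ) = M * (p*f+f+1) - M*p := by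
    have h := congrArg (Nat.cast : ℕ → ℚ) hSa
    push_cast at h; linarith
  have hScQ : (Sc U : ℚ) = M * (((M:ℚ)-1) * (p*f+f)) := by
    have h := congrArg (Nat.cast : ℕ → ℚ) hSc
    push_cast [Nat.cast_sub (show 1 ≤ M by omega)] at h
    exact h
  have hMQ : (2:ℚ) ≤ (M:ℚ) := by exact_mod_cast hM
  have hfQ : (1:ℚ) ≤ (f:ℚ) := by exact_mod_cast hf
  have hM0 : (M:ℚ) ≠ 0 := by intro h; rw [h] at hMQ; norm_num at hMQ
  have hM1 : (M:ℚ) - 1 ≠ 0 := by intro h; nlinarith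
  have hMf0 : (M:ℚ) * (f:ℚ) ≠ 0 := by intro h; nlinarith
  have hMf1 : (M:ℚ) * (f:ℚ) + 1 ≠ 0 := by intro h; nlinarith
  simp only [Aa, Ac]
  rw [hSaQ, hScQ, hpQ]
  field_simp
  ring
end

section
/- Let p = Mf + 1 be an odd prime with M ≥ 2 and f ≥ 1, and let U = {X_0, …, X_{M−1}} be the (p, M, M)-FHS set of Construction A, where X_i(0) = i and X_i(t) = r + i (mod M) whenever t ∈ C_r, with C_r the cyclotomic classes of order M in F_p. Then the average Hamming crosscorrelation of U equals A_c(U) = (Mf² + 2f)/(Mf + 1) (as a rational number). -/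
open Finset

/-! Away from `0`, the sequence `X_i` takes the frequency `r + i` exactly on the class `C_r`, and
the classes partition `F_p^*` into `M` sets of size `f`; hence `N_{X_i}(a) = f + [a = i]`.
Summing `H_{X_i,X_j}` over all shifts gives `Σ_a N_{X_i}(a) N_{X_j}(a) = M f² + 2f` for every
pair `i ≠ j`, and averaging over the `M(M - 1)` pairs and `p = Mf + 1` shifts gives the claim. -/

theorem sum_Hcorr_eq_sum_countFreq_mul {N : ℕ} [NeZero N] {F : Type*} [Fintype F]
    [DecidableEq F] (X Y : ZMod N → F) :
    ∑ τ : ZMod N, Hcorr X Y τ = ∑ a : F, countFreq X a * countFreq Y a := by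
  calc ∑ τ : ZMod N, Hcorr X Y τ
      = ∑ τ : ZMod N, ∑ t : ZMod N, if X t = Y (t + τ) then 1 else 0 := by
        simp only [Hcorr, card_filter]
    _ = ∑ t : ZMod N, countFreq Y (X t) := by
        rw [sum_comm]
        refine sum_congr rfl fun t _ => ?_
        rw [countFreq, card_filter]
        exact Fintype.sum_equiv (Equiv.addLeft t) _ _ fun τ => by simp [eq_comm]
    _ = ∑ a : F, countFreq X a * countFreq Y a := by
        rw [← sum_fiberwise univ X]
        refine sum_congr rfl fun a _ => ?_
        rw [sum_congr rfl fun t ht => by rw [(mem_filter.mp ht).2], sum_const, smul_eq_mul]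
        rfl

theorem sum_Hcorr_of_countFreq_eq {N : ℕ} [NeZero N] {F : Type*} [Fintype F] [DecidableEq F]
    {X Y : ZMod N → F} {f : ℕ} {c d : F} (hcd : c ≠ d)
    (hX : ∀ a, countFreq X a = f + if a = c then 1 else 0)
    (hY : ∀ a, countFreq Y a = f + if a = d then 1 else 0) :
    ∑ τ : ZMod N, Hcorr X Y τ = Fintype.card F * f ^ 2 + 2 * f := by
  have hterm : ∀ a, countFreq X a * countFreq Y a
      = f ^ 2 + ((if a = c then f else 0) + if a = d then f else 0) := by
    intro a
    rw [hX, hY]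
    split_ifs with hac had <;> first | exact absurd (hac.symm.trans had) hcd | ring
  simp only [sum_Hcorr_eq_sum_countFreq_mul, hterm, sum_add_distrib, sum_const, card_univ,
    smul_eq_mul, sum_ite_eq', mem_univ, if_true]
  ring

theorem Sc_eq_of_sum_Hcorr_eq {N L : ℕ} [NeZero N] {F : Type*} [DecidableEq F]
    {U : Fin L → ZMod N → F} {s : ℕ}
    (hU : ∀ i j, i ≠ j → ∑ τ : ZMod N, Hcorr (U i) (U j) τ = s) :
    Sc U = L * (L - 1) * s := by
  have hrow : ∀ i : Fin L, ∑ j ∈ univ \ {i}, ∑ τ : ZMod N, Hcorr (U i) (U j) τ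
      = (L - 1) * s := by
    intro i
    rw [sum_congr rfl fun j hj => hU i j (by simpa [eq_comm] using hj), sum_const,
      smul_eq_mul, card_sdiff_of_subset (subset_univ _), card_singleton, card_univ,
      Fintype.card_fin]
  rw [Sc, sum_congr rfl fun i _ => hrow i, sum_const, card_univ, Fintype.card_fin,
    smul_eq_mul, mul_assoc]

section Cyclotomic

variable {R : Type*} {α : R} {M f r : ℕ}

theorem card_cycClass [CommMonoid R] [DecidableEq R] (hα : IsPrimitiveRoot α (M * f))
    (hr : r < M) : #(cycClass α M f r) = f := by
  rw [cycClass, card_image_of_injOn, card_range]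
  intro l₁ hl₁ l₂ hl₂ h
  simp only [coe_range, Set.mem_Iio] at hl₁ hl₂
  have hlt : ∀ l < f, M * l + r < M * f := fun l hl => by nlinarith
  exact Nat.eq_of_mul_eq_mul_left (by omega)
    (Nat.add_right_cancel (hα.pow_inj (hlt l₁ hl₁) (hlt l₂ hl₂) h))

theorem zero_notMem_cycClass [MonoidWithZero R] [NoZeroDivisors R] [DecidableEq R]
    (hα : α ≠ 0) : (0 : R) ∉ cycClass α M f r := by
  simp only [cycClass, mem_image, not_exists, not_and]
  exact fun l _ => pow_ne_zero _ hα

theorem exists_mem_cycClass_of_pow_eq_one [CommRing R] [IsDomain R] [DecidableEq R]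
    (hα : IsPrimitiveRoot α (M * f)) (hMf : 0 < M * f) {x : R} (hx : x ^ (M * f) = 1) :
    ∃ r < M, x ∈ cycClass α M f r := by
  have : NeZero (M * f) := ⟨hMf.ne'⟩
  obtain ⟨k, hk, rfl⟩ := hα.eq_pow_of_pow_eq_one hx
  have hM : 0 < M := Nat.pos_of_mul_pos_right hMf
  refine ⟨k % M, Nat.mod_lt k hM, mem_image.mpr ⟨k / M, ?_, by rw [Nat.div_add_mod]⟩⟩
  rw [mem_range, Nat.div_lt_iff_lt_mul hM, mul_comm f]
  exact hk

theorem isPrimitiveRoot_of_forall_pow_eq [Field R] [Fintype R] [DecidableEq R]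
    (hR : 2 < Fintype.card R) (hα : ∀ x : R, x ≠ 0 → ∃ k : ℕ, α ^ k = x) :
    IsPrimitiveRoot α (Fintype.card R - 1) := by
  have hα0 : α ≠ 0 := by
    rintro rfl
    obtain ⟨x, -, hx⟩ := exists_mem_notMem_of_card_lt_card
      (s := ({0, 1} : Finset R)) (t := univ) (card_le_two.trans_lt (by rwa [card_univ]))
    have hx' : x ≠ 0 ∧ x ≠ 1 := by simpa using hx
    obtain ⟨k, hk⟩ := hα x hx'.1
    rcases k with _ | k
    · exact hx'.2 (by simpa using hk.symm)
    · exact hx'.1 (by simpa using hk.symm)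
  rw [IsPrimitiveRoot.iff_orderOf, ← Fintype.card_units, ← Nat.card_eq_fintype_card,
    ← Units.val_mk0 hα0, orderOf_units]
  refine orderOf_eq_card_of_forall_mem_zpowers fun x => ?_
  obtain ⟨k, hk⟩ := hα x x.ne_zero
  exact Subgroup.mem_zpowers_iff.mpr ⟨k, by ext; simp [hk]⟩

end Cyclotomic

theorem countFreq_of_cyclotomic {p M f : ℕ} [Fact p.Prime] [NeZero M] (hpMf : p = M * f + 1)
    {α : ZMod p} (hα : IsPrimitiveRoot α (M * f)) {X : ZMod p → ZMod M} {c : ZMod M}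
    (hX0 : X 0 = c) (hXC : ∀ r < M, ∀ t ∈ cycClass α M f r, X t = r + c) (a : ZMod M) :
    countFreq X a = f + if a = c then 1 else 0 := by
  have hMf : 0 < M * f := by have := (Fact.out : p.Prime).two_le; omega
  have hα0 : α ≠ 0 := hα.ne_zero hMf.ne'
  set r₀ := (a - c).val
  have hr₀ : r₀ < M := ZMod.val_lt _
  have hr₀_cast : (r₀ : ZMod M) + c = a := by simp [r₀]
  -- The frequency is constant on each class, so the class of `t` is read off from `X t`.
  have hfilter : (univ.erase 0).filter (fun t => X t = a) = cycClass α M f r₀ := by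
    ext t
    simp only [mem_filter, mem_erase, mem_univ, and_true]
    constructor
    · rintro ⟨ht, hta⟩
      have ht1 : t ^ (M * f) = 1 := by
        simpa [ZMod.card, hpMf] using FiniteField.pow_card_sub_one_eq_one t ht
      obtain ⟨r, hr, htr⟩ := exists_mem_cycClass_of_pow_eq_one hα hMf ht1
      have : (r : ZMod M) = r₀ :=
        add_right_cancel ((hXC r hr t htr).symm.trans (hta.trans hr₀_cast.symm))
      rwa [((ZMod.natCast_eq_natCast_iff r r₀ M).mp this).eq_of_lt_of_lt hr hr₀] at htr
    · intro ht
      exact ⟨fun h => zero_notMem_cycClass hα0 (h ▸ ht),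
        (hXC r₀ hr₀ t ht).trans hr₀_cast⟩
  rw [countFreq, ← insert_erase (mem_univ (0 : ZMod p)), filter_insert, hX0, hfilter]
  by_cases h : a = c
  · rw [if_pos h.symm, if_pos h, card_insert_of_notMem (zero_notMem_cycClass hα0),
      card_cycClass hα hr₀]
  · rw [if_neg (Ne.symm h), if_neg h, card_cycClass hα hr₀, add_zero]

theorem constructionA_Ac_general (p M f : ℕ) [NeZero p] (hp : p.Prime)
    (hM : 2 ≤ M) (hpMf : p = M * f + 1)
    (α : ZMod p) (hα : ∀ x : ZMod p, x ≠ 0 → ∃ k : ℕ, α ^ k = x)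
    (U : Fin M → ZMod p → ZMod M)
    (hU0 : ∀ i : Fin M, U i 0 = ((i : ℕ) : ZMod M))
    (hUC : ∀ (i : Fin M) (r : ℕ), r < M → ∀ t ∈ cycClass α M f r,
      U i t = (r : ZMod M) + ((i : ℕ) : ZMod M)) :
    Ac U = ((M : ℚ) * (f : ℚ) ^ 2 + 2 * (f : ℚ)) / ((M : ℚ) * (f : ℚ) + 1) := by
  have : Fact p.Prime := ⟨hp⟩
  have : NeZero M := ⟨by omega⟩
  have hMf : 2 ≤ M * f := by
    rcases Nat.eq_zero_or_pos f with rfl | hf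
    · rw [hpMf, mul_zero, zero_add] at hp
      exact absurd hp Nat.not_prime_one
    · nlinarith
  have hprim : IsPrimitiveRoot α (M * f) := by
    convert isPrimitiveRoot_of_forall_pow_eq (by rw [ZMod.card]; omega) hα using 1
    rw [ZMod.card]
    omega
  have hcount (i : Fin M) := countFreq_of_cyclotomic hpMf hprim (hU0 i) (hUC i)
  have hcross (i j : Fin M) (hij : i ≠ j) :
      ∑ τ : ZMod p, Hcorr (U i) (U j) τ = M * f ^ 2 + 2 * f := by
    rw [sum_Hcorr_of_countFreq_eq ?_ (hcount i) (hcount j), ZMod.card]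
    exact fun h => hij (Fin.ext (((ZMod.natCast_eq_natCast_iff _ _ M).mp h).eq_of_lt_of_lt
      i.isLt j.isLt))
  have hM1 : (M : ℚ) - 1 ≠ 0 := sub_ne_zero.mpr (by exact_mod_cast (by omega : M ≠ 1))
  rw [Ac, Sc_eq_of_sum_Hcorr_eq hcross, hpMf]
  push_cast [Nat.cast_sub (by omega : 1 ≤ M)]
  field_simp

/-- Construction A has average Hamming crosscorrelation `(Mf² + 2f)/(Mf + 1)`. -/
theorem constructionA_Ac (p M f : ℕ) [NeZero p] (hp : p.Prime) (hodd : Odd p)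
    (hM : 2 ≤ M) (hf : 1 ≤ f) (hpMf : p = M * f + 1)
    (α : ZMod p) (hα : ∀ x : ZMod p, x ≠ 0 → ∃ k : ℕ, α ^ k = x)
    (U : Fin M → ZMod p → ZMod M)
    (hU0 : ∀ i : Fin M, U i 0 = ((i : ℕ) : ZMod M))
    (hUC : ∀ (i : Fin M) (r : ℕ), r < M → ∀ t ∈ cycClass α M f r,
      U i t = (r : ZMod M) + ((i : ℕ) : ZMod M)) :
    Ac U = ((M : ℚ) * (f : ℚ) ^ 2 + 2 * (f : ℚ)) / ((M : ℚ) * (f : ℚ) + 1) :=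
  constructionA_Ac_general p M f hp hM hpMf α hα U hU0 hUC
end
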